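/- arXiv:1804.04705 — 2 statements merged into one kernel-verified Lean document; each statement's English description precedes it below -/
import Mathlib

section
/- Under the same setup — θ, Ψ : ℝ → ℝ smooth, φ : ℝ → ℝ³ smooth with ‖φ(t)‖ = 1 and ‖φ'(t)‖ = 1, A(s) = ∫_{s₀}^{s} sin θ(τ) dτ, m(s,t) = A(s) + Ψ(t) ≠ 0, x(s,t) = ( ∫_{s₀}^{s} cos θ(τ) dτ , A(s)·φ(t) + ∫_{t₀}^{t} Ψ(τ)·φ'(τ) dτ ) ∈ ℝ × ℝ³, and n(s,t) = ( sin θ(s), −cos θ(s)·φ(t) ) — define n₂(s,t) := ( 0, φ(t) × φ'(t) ) ∈ ℝ × ℝ³ using the cross product in ℝ³. Then for all (s,t): ‖n₂‖ = 1, ⟨n₂, x_s⟩ = 0, ⟨n₂, x_t⟩ = 0, ⟨n₂, n⟩ = 0, and moreover ⟨x_ss, n₂⟩ = 0 and ⟨x_st, n₂⟩ = 0. -/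
open scoped RealInnerProductSpace

noncomputable section

/-- `ℝ⁴` viewed as the L²-product `ℝ × ℝ³`. -/
abbrev E4 : Type := WithLp 2 (ℝ × EuclideanSpace ℝ (Fin 3))

/-- The point of `ℝ × ℝ³ = ℝ⁴` with first component `a` and second component `b`. -/
def mk4 (a : ℝ) (b : EuclideanSpace ℝ (Fin 3)) : E4 :=
  (WithLp.equiv 2 (ℝ × EuclideanSpace ℝ (Fin 3))).symm (a, b)

/-- The cross product on `ℝ³ = EuclideanSpace ℝ (Fin 3)`. -/
def cross3 (a b : EuclideanSpace ℝ (Fin 3)) : EuclideanSpace ℝ (Fin 3) :=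
  (EuclideanSpace.equiv (Fin 3) ℝ).symm
    (crossProduct ((EuclideanSpace.equiv (Fin 3) ℝ) a) ((EuclideanSpace.equiv (Fin 3) ℝ) b))

lemma inner_mk4 (a c : ℝ) (b d : EuclideanSpace ℝ (Fin 3)) :
    ⟪mk4 a b, mk4 c d⟫ = a * c + ⟪b, d⟫ := by
  simp [mk4, WithLp.prod_inner_apply, RCLike.inner_apply]; ring

lemma inner_cross3_left (a b : EuclideanSpace ℝ (Fin 3)) : ⟪cross3 a b, a⟫ = 0 := by
  simp only [cross3, PiLp.inner_apply, RCLike.inner_apply, conj_trivial]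
  simp only [EuclideanSpace.equiv, Fin.sum_univ_three, cross_apply]
  simp; ring

lemma inner_cross3_right (a b : EuclideanSpace ℝ (Fin 3)) : ⟪cross3 a b, b⟫ = 0 := by
  simp only [cross3, PiLp.inner_apply, RCLike.inner_apply, conj_trivial]
  simp only [EuclideanSpace.equiv, Fin.sum_univ_three, cross_apply]
  simp; ring

lemma inner_cross3_self (a b : EuclideanSpace ℝ (Fin 3)) :
    ⟪cross3 a b, cross3 a b⟫ = ⟪a, a⟫ * ⟪b, b⟫ - ⟪a, b⟫ * ⟪a, b⟫ := by
  simp only [cross3, PiLp.inner_apply, RCLike.inner_apply, conj_trivial]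
  simp only [EuclideanSpace.equiv, Fin.sum_univ_three, cross_apply]
  simp; ring

lemma hasDerivAt_intInt {F : Type*} [NormedAddCommGroup F] [NormedSpace ℝ F] [CompleteSpace F]
    {f : ℝ → F} (hf : Continuous f) (a b : ℝ) :
    HasDerivAt (fun u => ∫ τ in a..u, f τ) (f b) b :=
  intervalIntegral.integral_hasDerivAt_right (hf.intervalIntegrable a b)
    hf.aestronglyMeasurable.stronglyMeasurableAtFilter hf.continuousAt

lemma hasDerivAt_mk4 {f : ℝ → ℝ} {g : ℝ → EuclideanSpace ℝ (Fin 3)} {f' : ℝ}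
    {g' : EuclideanSpace ℝ (Fin 3)} {s : ℝ}
    (hf : HasDerivAt f f' s) (hg : HasDerivAt g g' s) :
    HasDerivAt (fun u => mk4 (f u) (g u)) (mk4 f' g') s := by
  have h := ((WithLp.prodContinuousLinearEquiv 2 ℝ ℝ
      (EuclideanSpace ℝ (Fin 3))).symm.toContinuousLinearMap.hasFDerivAt.comp_hasDerivAt
      s (hf.prodMk hg))
  simpa [mk4, Function.comp_def] using h

lemma inner_left_cross3 (a b : EuclideanSpace ℝ (Fin 3)) : ⟪a, cross3 a b⟫ = 0 := by
  rw [real_inner_comm]; exact inner_cross3_left a b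

lemma inner_right_cross3 (a b : EuclideanSpace ℝ (Fin 3)) : ⟪b, cross3 a b⟫ = 0 := by
  rw [real_inner_comm]; exact inner_cross3_right a b

/-- For the explicit parametrization
`x (s,t) = (∫_{s₀}^s cos θ, A s • φ t + ∫_{t₀}^t Ψ • φ')` with `A s = ∫_{s₀}^s sin θ`,
`m = A + Ψ ≠ 0`, `‖φ‖ = ‖φ'‖ = 1`, `n (s,t) = (sin (θ s), -cos (θ s) • φ t)` and
`n₂ (s,t) := (0, φ t × φ' t)`: `‖n₂‖ = 1`, `⟪n₂, x_s⟫ = 0`, `⟪n₂, x_t⟫ = 0`,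
`⟪n₂, n⟫ = 0`, `⟪x_ss, n₂⟫ = 0` and `⟪x_st, n₂⟫ = 0`. -/
theorem stmt_6 (θ Ψ : ℝ → ℝ) (φ : ℝ → EuclideanSpace ℝ (Fin 3)) (s₀ t₀ : ℝ)
    (hθ : ContDiff ℝ (⊤ : ℕ∞) θ) (hΨ : ContDiff ℝ (⊤ : ℕ∞) Ψ) (hφ : ContDiff ℝ (⊤ : ℕ∞) φ)
    (hφ1 : ∀ t, ‖φ t‖ = 1) (hφ'1 : ∀ t, ‖deriv φ t‖ = 1)
    (A : ℝ → ℝ) (hA : ∀ s, A s = ∫ τ in s₀..s, Real.sin (θ τ))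
    (m : ℝ → ℝ → ℝ) (hm : ∀ s t, m s t = A s + Ψ t)
    (hm0 : ∀ s t, m s t ≠ 0)
    (x : ℝ → ℝ → E4)
    (hx : ∀ s t, x s t = mk4 (∫ τ in s₀..s, Real.cos (θ τ))
        (A s • φ t + ∫ τ in t₀..t, Ψ τ • deriv φ τ))
    (n : ℝ → ℝ → E4)
    (hn : ∀ s t, n s t = mk4 (Real.sin (θ s)) (-(Real.cos (θ s)) • φ t))
    (n₂ : ℝ → ℝ → E4)
    (hn₂ : ∀ s t, n₂ s t = mk4 0 (cross3 (φ t) (deriv φ t))) :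
    ∀ s t,
      ‖n₂ s t‖ = 1 ∧
      ⟪n₂ s t, deriv (fun σ => x σ t) s⟫ = 0 ∧
      ⟪n₂ s t, deriv (fun τ => x s τ) t⟫ = 0 ∧
      ⟪n₂ s t, n s t⟫ = 0 ∧
      ⟪deriv (deriv (fun σ => x σ t)) s, n₂ s t⟫ = 0 ∧
      ⟪deriv (fun σ => deriv (fun τ => x σ τ) t) s, n₂ s t⟫ = 0 := by
  have hθc : Continuous θ := hθ.continuous
  have hφd : ∀ u, HasDerivAt φ (deriv φ u) u := fun u =>
    ((hφ.differentiable (by simp)) u).hasDerivAt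
  have hφdc : Continuous (deriv φ) := hφ.continuous_deriv (by simp)
  have hθd : ∀ u, HasDerivAt θ (deriv θ u) u := fun u =>
    ((hθ.differentiable (by simp)) u).hasDerivAt
  have hAd : ∀ u, HasDerivAt A (Real.sin (θ u)) u := by
    intro u
    have hAe : A = fun s => ∫ τ in s₀..s, Real.sin (θ τ) := funext hA
    rw [hAe]
    exact hasDerivAt_intInt (Real.continuous_sin.comp hθc) s₀ u
  intro s t
  have hxs : ∀ σ, HasDerivAt (fun σ => x σ t)
      (mk4 (Real.cos (θ σ)) (Real.sin (θ σ) • φ t)) σ := by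
    intro σ
    have hre : (fun σ => x σ t) = fun σ => mk4 (∫ τ in s₀..σ, Real.cos (θ τ))
        (A σ • φ t + ∫ τ in t₀..t, Ψ τ • deriv φ τ) := funext fun σ => hx σ t
    rw [hre]
    exact hasDerivAt_mk4 (hasDerivAt_intInt (Real.continuous_cos.comp hθc) s₀ σ)
      (((hAd σ).smul_const (φ t)).add_const _)
  have hxt : ∀ σ τ, HasDerivAt (fun τ => x σ τ)
      (mk4 0 (A σ • deriv φ τ + Ψ τ • deriv φ τ)) τ := by
    intro σ τ
    have hre : (fun τ => x σ τ) = fun τ => mk4 (∫ u in s₀..σ, Real.cos (θ u))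
        (A σ • φ τ + ∫ u in t₀..τ, Ψ u • deriv φ u) := funext fun τ => hx σ τ
    rw [hre]
    have h0 : HasDerivAt (fun _ : ℝ => (∫ u in s₀..σ, Real.cos (θ u))) 0 τ :=
      hasDerivAt_const _ _
    exact hasDerivAt_mk4 h0
      (((hφd τ).const_smul (A σ)).add
        (hasDerivAt_intInt (hΨ.continuous.smul hφdc) t₀ τ))
  have hxs_eq : deriv (fun σ => x σ t)
      = fun σ => mk4 (Real.cos (θ σ)) (Real.sin (θ σ) • φ t) :=
    funext fun σ => (hxs σ).deriv
  have hxss : HasDerivAt (deriv (fun σ => x σ t))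
      (mk4 (-Real.sin (θ s) * deriv θ s) ((Real.cos (θ s) * deriv θ s) • φ t)) s := by
    rw [hxs_eq]
    exact hasDerivAt_mk4
      ((Real.hasDerivAt_cos (θ s)).comp s (hθd s))
      ((((Real.hasDerivAt_sin (θ s)).comp s (hθd s))).smul_const (φ t))
  have hxst : HasDerivAt (fun σ => deriv (fun τ => x σ τ) t)
      (mk4 (0:ℝ) (Real.sin (θ s) • deriv φ t)) s := by
    have hre : (fun σ => deriv (fun τ => x σ τ) t)
        = fun σ => mk4 0 (A σ • deriv φ t + Ψ t • deriv φ t) :=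
      funext fun σ => (hxt σ t).deriv
    rw [hre]
    exact hasDerivAt_mk4 (hasDerivAt_const _ _)
      (((hAd s).smul_const (deriv φ t)).add_const _)
  have hperp : ⟪φ t, deriv φ t⟫ = 0 := by
    have h1 : HasDerivAt (fun u => (⟪φ u, φ u⟫ : ℝ))
        (⟪φ t, deriv φ t⟫ + ⟪deriv φ t, φ t⟫) t := (hφd t).inner ℝ (hφd t)
    have h2 : (fun u => (⟪φ u, φ u⟫ : ℝ)) = fun _ => (1:ℝ) := by
      funext u
      rw [real_inner_self_eq_norm_mul_norm, hφ1 u]; norm_num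
    have h3 := h1.unique (h2 ▸ hasDerivAt_const t (1:ℝ))
    have h4 := real_inner_comm (φ t) (deriv φ t)
    linarith
  refine ⟨?_, ?_, ?_, ?_, ?_, ?_⟩
  · have hin : ⟪n₂ s t, n₂ s t⟫ = 1 := by
      rw [hn₂, inner_mk4, inner_cross3_self, real_inner_self_eq_norm_mul_norm,
        real_inner_self_eq_norm_mul_norm, hφ1, hφ'1, hperp]
      norm_num
    have := real_inner_self_eq_norm_mul_norm (n₂ s t)
    nlinarith [norm_nonneg (n₂ s t)]
  · rw [(hxs s).deriv, hn₂, inner_mk4, real_inner_smul_right, inner_cross3_left]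
    ring
  · rw [(hxt s t).deriv, hn₂, inner_mk4, inner_add_right, real_inner_smul_right,
      real_inner_smul_right, inner_cross3_right]
    ring
  · rw [hn, hn₂, inner_mk4, real_inner_smul_right, inner_cross3_left]
    ring
  · rw [hxss.deriv, hn₂, inner_mk4, real_inner_smul_left, inner_left_cross3]
    ring
  · rw [hxst.deriv, hn₂, inner_mk4, real_inner_smul_left, inner_right_cross3]
    ring

end
end

section
/- Let θ ∈ ℝ be a constant, v ∈ ℝ³ with ‖v‖ = 1, and φ : ℝ → ℝ³ smooth with ‖φ'(t)‖ = 1 and ⟨v, φ'(t)⟩ = 0 for all t. Define x : ℝ² → ℝ × ℝ³ = ℝ⁴ by x(s,t) = ( s·cos θ , s·sin θ·v + φ(t) ). Then for all (s,t): ‖x_s‖ = 1, ⟨x_s, x_t⟩ = 0, ‖x_t‖ = 1, ⟨k, x_s⟩ = cos θ and ⟨k, x_t⟩ = 0 where k = (1,0,0,0), x_ss = 0 and x_st = 0; in particular x_st is tangent to the surface, so the tangential component of k is a principal direction of every shape operator, and the induced metric ds² + dt² is flat. -/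
open scoped RealInnerProductSpace

noncomputable section

abbrev L : E4 ≃L[ℝ] ℝ × EuclideanSpace ℝ (Fin 3) :=
  WithLp.prodContinuousLinearEquiv 2 ℝ _ _

lemma mk4_eq (a b) : mk4 a b = L.symm (a, b) := rfl

lemma hasDerivAt_s (θ : ℝ) (v : EuclideanSpace ℝ (Fin 3))
    (φ : ℝ → EuclideanSpace ℝ (Fin 3)) (t s : ℝ) :
    HasDerivAt (fun σ => mk4 (σ * Real.cos θ) ((σ * Real.sin θ) • v + φ t))
      (mk4 (Real.cos θ) (Real.sin θ • v)) s := by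
  have h1 : HasDerivAt (fun σ : ℝ => (σ * Real.cos θ, (σ * Real.sin θ) • v + φ t))
      (Real.cos θ, Real.sin θ • v) s := by
    apply HasDerivAt.prodMk
    · simpa using (hasDerivAt_id s).mul_const (Real.cos θ)
    · have : HasDerivAt (fun σ : ℝ => (σ * Real.sin θ) • v) (Real.sin θ • v) s := by
        simpa [mul_smul] using ((hasDerivAt_id s).mul_const (Real.sin θ)).smul_const v
      simpa using this.add_const (φ t)
  exact (L.symm.toContinuousLinearMap.hasFDerivAt.comp_hasDerivAt s h1)

lemma hasDerivAt_t (θ : ℝ) (v : EuclideanSpace ℝ (Fin 3))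
    (φ : ℝ → EuclideanSpace ℝ (Fin 3)) (hφ : ContDiff ℝ (⊤ : ℕ∞) φ) (s t : ℝ) :
    HasDerivAt (fun τ => mk4 (s * Real.cos θ) ((s * Real.sin θ) • v + φ τ))
      (mk4 0 (deriv φ t)) t := by
  have h1 : HasDerivAt (fun τ : ℝ => (s * Real.cos θ, (s * Real.sin θ) • v + φ τ))
      ((0 : ℝ), deriv φ t) t := by
    apply HasDerivAt.prodMk
    · simpa using hasDerivAt_const t (s * Real.cos θ)
    · exact ((hφ.differentiable (by simp) t).hasDerivAt).const_add _
  exact (L.symm.toContinuousLinearMap.hasFDerivAt.comp_hasDerivAt t h1)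

/-- For a constant angle `θ` and the flat parametrization
`x (s,t) = (s cos θ, (s sin θ) • v + φ t)` with `‖v‖ = 1`, `‖φ'‖ = 1` and
`⟪v, φ'⟫ = 0`: `‖x_s‖ = 1`, `⟪x_s, x_t⟫ = 0`, `‖x_t‖ = 1`, `⟪k, x_s⟫ = cos θ` and
`⟪k, x_t⟫ = 0` for `k = (1,0,0,0)`, `x_ss = 0` and `x_st = 0`; in particular `x_st`
is tangent to the surface and the induced metric `ds² + dt²` is flat. -/
theorem stmt_10 (θ : ℝ) (v : EuclideanSpace ℝ (Fin 3))
    (φ : ℝ → EuclideanSpace ℝ (Fin 3))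
    (hv : ‖v‖ = 1) (hφ : ContDiff ℝ (⊤ : ℕ∞) φ)
    (hφ'1 : ∀ t, ‖deriv φ t‖ = 1) (hvφ : ∀ t, ⟪v, deriv φ t⟫ = 0)
    (x : ℝ → ℝ → E4)
    (hx : ∀ s t, x s t = mk4 (s * Real.cos θ) ((s * Real.sin θ) • v + φ t)) :
    ∀ s t,
      ‖deriv (fun σ => x σ t) s‖ = 1 ∧
      ⟪deriv (fun σ => x σ t) s, deriv (fun τ => x s τ) t⟫ = 0 ∧
      ‖deriv (fun τ => x s τ) t‖ = 1 ∧
      ⟪mk4 1 0, deriv (fun σ => x σ t) s⟫ = Real.cos θ ∧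
      ⟪mk4 1 0, deriv (fun τ => x s τ) t⟫ = 0 ∧
      deriv (deriv (fun σ => x σ t)) s = 0 ∧
      deriv (fun σ => deriv (fun τ => x σ τ) t) s = 0 := by
  intro s t
  have hxs : ∀ s t : ℝ, deriv (fun σ => x σ t) s = mk4 (Real.cos θ) (Real.sin θ • v) := by
    intro s t
    have := hasDerivAt_s θ v φ t s
    rw [show (fun σ => x σ t) = fun σ => mk4 (σ * Real.cos θ) ((σ * Real.sin θ) • v + φ t)
      from funext fun σ => hx σ t]
    exact this.deriv
  have hxt : ∀ s t : ℝ, deriv (fun τ => x s τ) t = mk4 0 (deriv φ t) := by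
    intro s t
    have := hasDerivAt_t θ v φ hφ s t
    rw [show (fun τ => x s τ) = fun τ => mk4 (s * Real.cos θ) ((s * Real.sin θ) • v + φ τ)
      from funext fun τ => hx s τ]
    exact this.deriv
  have hnorm : ∀ (a : ℝ) (b : EuclideanSpace ℝ (Fin 3)), ‖mk4 a b‖ ^ 2 = a ^ 2 + ‖b‖ ^ 2 := by
    intro a b
    simpa [mk4] using WithLp.prod_norm_sq_eq_of_L2 (mk4 a b)
  have hinner : ∀ (a c : ℝ) (b d : EuclideanSpace ℝ (Fin 3)),
      ⟪mk4 a b, mk4 c d⟫ = a * c + ⟪b, d⟫ := fun a c b d => by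
        simp [mk4, WithLp.prod_inner_apply, mul_comm]
  refine ⟨?_, ?_, ?_, ?_, ?_, ?_, ?_⟩
  · rw [hxs]
    have h2 : ‖mk4 (Real.cos θ) (Real.sin θ • v)‖ ^ 2 = 1 := by
      rw [hnorm]
      rw [norm_smul, hv, mul_one, Real.norm_eq_abs, sq_abs]
      exact Real.cos_sq_add_sin_sq θ
    nlinarith [norm_nonneg (mk4 (Real.cos θ) (Real.sin θ • v))]
  · rw [hxs, hxt, hinner]
    simp [inner_smul_left, hvφ t]
  · rw [hxt]
    have h2 : ‖mk4 0 (deriv φ t)‖ ^ 2 = 1 := by rw [hnorm]; simp [hφ'1 t]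
    nlinarith [norm_nonneg (mk4 0 (deriv φ t))]
  · rw [hxs, hinner]; simp
  · rw [hxt, hinner]; simp
  · have : deriv (fun σ => x σ t) = fun _ => mk4 (Real.cos θ) (Real.sin θ • v) :=
      funext fun σ => hxs σ t
    rw [this]; exact deriv_const _ _
  · have : (fun σ => deriv (fun τ => x σ τ) t) = fun _ => mk4 0 (deriv φ t) :=
      funext fun σ => hxt σ t
    rw [this]; exact deriv_const _ _


end
end
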